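/- arXiv:2206.08210 — 3 statements merged into one kernel-verified Lean document; each statement's English description precedes it below -/
import Mathlib

section
/- Define u : ℂ³ → ℝ by u(x₁, x₂, y) = (s + √(s² − |y|⁶))^{1/3} + (s − √(s² − |y|⁶))^{1/3}, where s = |x₁|² + |x₂|² and real (nonnegative) square roots and cube roots are used. Fix ζ ∈ ℂ with ζ³ = −1 and define Φ : ℂ² → ℂ³ by Φ(z₁, z₂) = ((z₁³ + z₂³)/2, (z₁³ − z₂³)/(2√−1), ζ z₁ z₂). Then the pullback of u under Φ is the flat Kähler potential of ℂ²: for all (z₁, z₂) ∈ ℂ², u(Φ(z₁, z₂)) = |z₁|² + |z₂|². -/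
/-! The map `Φ` turns `s = |x₁|² + |x₂|²` into `(a³ + b³)/2` and `|y|²` into `a b`, where
`a = |z₁|²`, `b = |z₂|²` (parallelogram law, `|ζ| = 1`). The discriminant `s² − (ab)³` is then the
square `((a³ − b³)/2)²`, so the two radicands of `u` are exactly `a³` and `b³`. -/

/-- The explicit potential `r²` on the A₂ singularity in ambient coordinates. -/
noncomputable def A2potential (x₁ x₂ y : ℂ) : ℝ :=
  (‖x₁‖^2 + ‖x₂‖^2
      + Real.sqrt ((‖x₁‖^2 + ‖x₂‖^2)^2 - ‖y‖^6))
    ^ ((1:ℝ)/3)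
  + (‖x₁‖^2 + ‖x₂‖^2
      - Real.sqrt ((‖x₁‖^2 + ‖x₂‖^2)^2 - ‖y‖^6))
    ^ ((1:ℝ)/3)

lemma Real.rpow_one_third_of_pow_three {x : ℝ} (hx : 0 ≤ x) : (x ^ 3) ^ ((1 : ℝ) / 3) = x := by
  simpa using Real.pow_rpow_inv_natCast hx three_ne_zero

lemma Real.sqrt_half_add_cube_sq_sub_mul_cube {a b : ℝ} (hba : b ≤ a) (hb : 0 ≤ b) :
    √(((a ^ 3 + b ^ 3) / 2) ^ 2 - (a * b) ^ 3) = (a ^ 3 - b ^ 3) / 2 := by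
  have hcube : b ^ 3 ≤ a ^ 3 := pow_le_pow_left₀ hb hba 3
  rw [show ((a ^ 3 + b ^ 3) / 2) ^ 2 - (a * b) ^ 3 = ((a ^ 3 - b ^ 3) / 2) ^ 2 by ring,
    Real.sqrt_sq (by linarith)]

lemma Real.cbrt_add_sqrt_add_cbrt_sub_sqrt {a b : ℝ} (ha : 0 ≤ a) (hb : 0 ≤ b) :
    ((a ^ 3 + b ^ 3) / 2 + √(((a ^ 3 + b ^ 3) / 2) ^ 2 - (a * b) ^ 3)) ^ ((1 : ℝ) / 3)
      + ((a ^ 3 + b ^ 3) / 2 - √(((a ^ 3 + b ^ 3) / 2) ^ 2 - (a * b) ^ 3)) ^ ((1 : ℝ) / 3)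
      = a + b := by
  wlog hba : b ≤ a generalizing a b
  · have := this hb ha (le_of_not_ge hba)
    rwa [add_comm (b ^ 3), mul_comm b, add_comm b] at this
  rw [Real.sqrt_half_add_cube_sq_sub_mul_cube hba hb,
    show (a ^ 3 + b ^ 3) / 2 + (a ^ 3 - b ^ 3) / 2 = a ^ 3 by ring,
    show (a ^ 3 + b ^ 3) / 2 - (a ^ 3 - b ^ 3) / 2 = b ^ 3 by ring,
    Real.rpow_one_third_of_pow_three ha, Real.rpow_one_third_of_pow_three hb]

lemma Complex.norm_half_add_sq_add_norm_half_sub_div_I_sq (w₁ w₂ : ℂ) :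
    ‖(w₁ + w₂) / 2‖ ^ 2 + ‖(w₁ - w₂) / (2 * I)‖ ^ 2 = (‖w₁‖ ^ 2 + ‖w₂‖ ^ 2) / 2 := by
  have := parallelogram_law_with_norm ℝ w₁ w₂
  simp only [norm_div, norm_mul, Complex.norm_I, Complex.norm_ofNat, mul_one, div_pow]
  linarith

/-- The pullback of the potential `u = r²` of the A₂ cone metric under
`Φ(z₁,z₂) = ((z₁³+z₂³)/2, (z₁³−z₂³)/(2i), ζz₁z₂)` (`ζ³ = -1`) is the flat Kähler
potential `|z₁|² + |z₂|²` of `ℂ²`. -/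
theorem stmt_7 (ζ : ℂ) (hζ : ζ^3 = -1) (z₁ z₂ : ℂ) :
    A2potential ((z₁^3 + z₂^3)/2) ((z₁^3 - z₂^3)/(2*Complex.I)) (ζ*z₁*z₂)
      = ‖z₁‖^2 + ‖z₂‖^2 := by
  have hζ_norm : ‖ζ‖ = 1 :=
    Complex.norm_eq_one_of_pow_eq_one (n := 6) (by rw [pow_mul ζ 3 2, hζ]; norm_num) (by norm_num)
  have hs : ‖(z₁ ^ 3 + z₂ ^ 3) / 2‖ ^ 2 + ‖(z₁ ^ 3 - z₂ ^ 3) / (2 * Complex.I)‖ ^ 2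
      = ((‖z₁‖ ^ 2) ^ 3 + (‖z₂‖ ^ 2) ^ 3) / 2 := by
    rw [Complex.norm_half_add_sq_add_norm_half_sub_div_I_sq, norm_pow, norm_pow]
    ring
  have hy : ‖ζ * z₁ * z₂‖ ^ 6 = (‖z₁‖ ^ 2 * ‖z₂‖ ^ 2) ^ 3 := by
    rw [norm_mul, norm_mul, hζ_norm, one_mul]
    ring
  rw [A2potential, hs, hy]
  exact Real.cbrt_add_sqrt_add_cbrt_sub_sqrt (sq_nonneg _) (sq_nonneg _)
end

section
/- Let a₁₁, a₁₂, a₂₁, a₂₂, b ∈ ℂ, and consider the linear holomorphic vector field W = Σ_{i,j} a_{ij} x_i ∂_{x_j} + b y ∂_y on ℂ³, so that W applied to f = x₁² + x₂² + y³ is the polynomial W(f)(x₁,x₂,y) = 2x₁(a₁₁x₁ + a₂₁x₂) + 2x₂(a₁₂x₁ + a₂₂x₂) + 3b y³. Then W(f) vanishes at every point of the A₂ singularity {x₁² + x₂² + y³ = 0} if and only if a₁₁ = a₂₂, a₂₁ = −a₁₂, and 2a₁₁ = 3b. Equivalently, W is tangent to the A₂ singularity if and only if W = b(y∂_y + (3/2)x₁∂_{x₁}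 + (3/2)x₂∂_{x₂}) + a₁₂(x₁∂_{x₂} − x₂∂_{x₁}), in which case W(f) = 3b·f. -/
/-- The linear vector field `W = Σ aᵢⱼ xᵢ∂_{xⱼ} + by∂_y`, with
`W(f) = 2x₁(a₁₁x₁+a₂₁x₂) + 2x₂(a₁₂x₁+a₂₂x₂) + 3by³` for `f = x₁²+x₂²+y³`, is
tangent to the A₂ singularity iff `a₁₁ = a₂₂`, `a₂₁ = −a₁₂` and `2a₁₁ = 3b`,
in which case `W(f) = 3b·f`. -/
theorem stmt_12 (a₁₁ a₁₂ a₂₁ a₂₂ b : ℂ) :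
    ((∀ x₁ x₂ y : ℂ, x₁^2 + x₂^2 + y^3 = 0 →
        2*x₁*(a₁₁*x₁ + a₂₁*x₂) + 2*x₂*(a₁₂*x₁ + a₂₂*x₂) + 3*b*y^3 = 0) ↔
      (a₁₁ = a₂₂ ∧ a₂₁ = -a₁₂ ∧ 2*a₁₁ = 3*b)) ∧
    ((a₁₁ = a₂₂ ∧ a₂₁ = -a₁₂ ∧ 2*a₁₁ = 3*b) →
      ∀ x₁ x₂ y : ℂ,
        2*x₁*(a₁₁*x₁ + a₂₁*x₂) + 2*x₂*(a₁₂*x₁ + a₂₂*x₂) + 3*b*y^3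
          = 3*b*(x₁^2 + x₂^2 + y^3)) := by
  have hI : Complex.I ^ 2 = -1 := Complex.I_sq
  constructor
  · constructor
    · intro h
      have h1 := h 1 0 (-1) (by ring)
      have h2 := h 0 1 (-1) (by ring)
      have h3 := h 1 Complex.I 0 (by linear_combination hI)
      have h4 := h 1 (-Complex.I) 0 (by linear_combination hI)
      have e : (a₁₁ - a₂₂) + (a₂₁ + a₁₂)*Complex.I = 0 := by
        linear_combination h3/2 - a₂₂*hI
      have e' : (a₁₁ - a₂₂) - (a₂₁ + a₁₂)*Complex.I = 0 := by
        linear_combination h4/2 - a₂₂*hI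
      refine ⟨?_, ?_, ?_⟩
      · linear_combination e/2 + e'/2
      · linear_combination (-Complex.I/2)*e + (Complex.I/2)*e' + (a₂₁+a₁₂)*hI
      · linear_combination h1
    · rintro ⟨h1, h2, h3⟩ x₁ x₂ y hxy
      subst h1 h2
      linear_combination (x₁^2 + x₂^2)*h3 + 3*b*hxy
  · rintro ⟨h1, h2, h3⟩ x₁ x₂ y
    subst h1 h2
    linear_combination (x₁^2 + x₂^2)*h3
end

section
/- Let b, b' ∈ ℂ and let a₁, a₂, a₃ ∈ ℂ be nonzero. Suppose that for every (z, x₁, x₂, y) ∈ ℂ⁴ with z + b y + x₁² + x₂² + y³ = 0, the point (a₁z, a₃x₁, a₃x₂, a₂y) satisfies a₁z + b'·a₂y + a₃²x₁² + a₃²x₂² + a₂³y³ = 0 — i.e. the linear map (z, x₁, x₂, y) ↦ (a₁z, a₃x₁, a₃x₂, a₂y) carries X_{1,b} into X_{1,b'}. Then a₁ = a₂³ = a₃² and a₂·b' = a₁·b; in particular b'/b = a₂² when b ≠ 0, and 1/a₁ = b/(b'a₂) = 1/a₂³ = 1/a₃² as in the coefficient comparison used to distinguish the metrics ω_{1,b}.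 -/
/-- If the linear map `(z,x₁,x₂,y) ↦ (a₁z, a₃x₁, a₃x₂, a₂y)` (with
`a₁, a₂, a₃ ≠ 0`) carries `X_{1,b}` into `X_{1,b'}`, then `a₁ = a₂³ = a₃²` and
`a₂b' = a₁b`; in particular `b'/b = a₂²` when `b ≠ 0`. -/
theorem stmt_15 (b b' a₁ a₂ a₃ : ℂ) (h₁ : a₁ ≠ 0) (h₂ : a₂ ≠ 0) (h₃ : a₃ ≠ 0)
    (h : ∀ z x₁ x₂ y : ℂ, z + b*y + x₁^2 + x₂^2 + y^3 = 0 →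
      a₁*z + b'*(a₂*y) + (a₃*x₁)^2 + (a₃*x₂)^2 + (a₂*y)^3 = 0) :
    a₁ = a₂^3 ∧ a₁ = a₃^2 ∧ a₂*b' = a₁*b ∧ (b ≠ 0 → b'/b = a₂^2) := by
  have e1 := h (-1) 1 0 0 (by ring)
  have e2 := h (-(b + 1)) 0 0 1 (by ring)
  have e3 := h (-(2*b + 8)) 0 0 2 (by ring)
  have ha13 : a₁ = a₃^2 := by linear_combination -e1
  have ha12 : a₁ = a₂^3 := by linear_combination (2*e2 - e3)/6
  have hb : a₂*b' = a₁*b := by linear_combination (4*e2 - e3)/2 - 2*ha12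
  refine ⟨ha12, ha13, hb, fun hbne => ?_⟩
  rw [div_eq_iff hbne]
  apply mul_left_cancel₀ h₂
  linear_combination hb + b*ha12
end
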